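/- arXiv:2403.18034 — 4 statements merged into one kernel-verified Lean document; each statement's English description precedes it below -/
import Mathlib

section
/- Let a be a nonzero integer and let K = ℚ(ζ₃) be the third cyclotomic field. Then a is not a square in K (i.e., there is no b ∈ K with b² = a) if and only if E_a(K)[3] = 0, i.e., the only point P of E_a(K) with 3 • P = 0 is the zero point. -/
/-!
A point `P = (x, y)` of `y² = x³ + a` with `3 • P = 0`, i.e. `P + P = -P`, cannot have `y = 0`
(then `P` would be `2`-torsion), so the tangent at `P` has slope `3x² / (2y)` and the doubling
formula must return `x`, which amounts to `x (x³ + 4a) = 0`. For `x = 0` this gives `a = y²`; for `x³ = -4a` it gives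
`-3a = y²`, and `-3 = (2ζ₃ + 1)²` is a square in `ℚ(ζ₃)`, so `a` is a square again.
Conversely, if `a = b²` with `b ≠ 0`, the point `(0, b)` is a flex and has order `3`.
-/

/-- The elliptic curve `y² = x³ + a` over a field `F`. -/
def Ea (F : Type*) [Field F] (a : F) : WeierstrassCurve.Affine F :=
  { a₁ := 0, a₂ := 0, a₃ := 0, a₄ := 0, a₆ := a }

open WeierstrassCurve.Affine

lemma IsPrimitiveRoot.two_mul_add_one_sq {R : Type*} [CommRing R] [IsDomain R] {ζ : R}
    (hζ : IsPrimitiveRoot ζ 3) : (2 * ζ + 1) ^ 2 = -3 := by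
  have h := hζ.geom_sum_eq_zero (by norm_num)
  simp only [Finset.sum_range_succ, Finset.range_zero, Finset.sum_empty] at h
  linear_combination 4 * h

lemma three_nsmul_eq_zero_iff_add_self_eq_neg {G : Type*} [AddCommGroup G] (P : G) :
    3 • P = 0 ↔ P + P = -P := by
  rw [eq_neg_iff_add_eq_zero, succ_nsmul, two_nsmul]

namespace Ea

variable {F : Type*} [Field F] {a : F}

lemma negY_eq (x y : F) : (Ea F a).negY x y = -y := by
  simp [Ea, negY]

lemma equation_iff' {x y : F} : (Ea F a).Equation x y ↔ y ^ 2 = x ^ 3 + a := by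
  rw [WeierstrassCurve.Affine.equation_iff]
  simp only [Ea]
  constructor <;> intro h <;> linear_combination h

lemma Y_ne_negY (h2 : (2 : F) ≠ 0) {x y : F} (hy : y ≠ 0) : y ≠ (Ea F a).negY x y := by
  rw [negY_eq]
  intro h
  exact hy (by simpa [h2] using (show 2 * y = 0 by linear_combination h))

lemma nonsingular_of_equation (h2 : (2 : F) ≠ 0) {x y : F} (h : y ^ 2 = x ^ 3 + a)
    (hy : y ≠ 0) : (Ea F a).Nonsingular x y :=
  (nonsingular_iff ..).mpr ⟨equation_iff'.mpr h, Or.inr (Y_ne_negY h2 hy)⟩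

variable [DecidableEq F]

lemma slope_self (h2 : (2 : F) ≠ 0) {x y : F} (hy : y ≠ 0) :
    (Ea F a).slope x x y y = 3 * x ^ 2 / (2 * y) := by
  rw [slope_of_Y_ne rfl (Y_ne_negY h2 hy), negY_eq]
  simp only [Ea]
  ring

lemma three_nsmul_some_zero (h2 : (2 : F) ≠ 0) {b : F} (hns : (Ea F a).Nonsingular 0 b)
    (hb : b ≠ 0) : 3 • Point.some _ _ hns = 0 := by
  rw [three_nsmul_eq_zero_iff_add_self_eq_neg, Point.add_self_of_Y_ne (Y_ne_negY h2 hb),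
    Point.neg_some, Point.some.injEq, slope_self h2 hb]
  simp [Ea, addX, addY, negAddY, negY]

lemma Y_ne_zero_and_X_mul_eq_zero_of_three_nsmul (h2 : (2 : F) ≠ 0) (h3 : (3 : F) ≠ 0)
    {x y : F} (hns : (Ea F a).Nonsingular x y) (htor : 3 • Point.some _ _ hns = 0) :
    y ≠ 0 ∧ x * (x ^ 3 + 4 * a) = 0 := by
  rw [three_nsmul_eq_zero_iff_add_self_eq_neg] at htor
  have hy : y ≠ 0 := by
    rintro rfl
    rw [Point.add_self_of_Y_eq (by rw [negY_eq, neg_zero]), zero_eq_neg] at htor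
    exact Point.some_ne_zero hns htor
  refine ⟨hy, ?_⟩
  rw [Point.add_self_of_Y_ne (Y_ne_negY h2 hy), Point.neg_some, Point.some.injEq,
    slope_self h2 hy] at htor
  have hX : (3 * x ^ 2 / (2 * y)) ^ 2 - x - x = x := by
    simpa [Ea, addX] using htor.1
  have heq := equation_iff'.mp hns.1
  field_simp at hX
  have : 3 * (x * (x ^ 3 + 4 * a)) = 0 := by linear_combination -hX - 12 * x * heq
  simpa [h3] using this

theorem exists_sq_eq_iff_exists_three_torsion (h2 : (2 : F) ≠ 0) (h3 : (3 : F) ≠ 0)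
    (hsq : IsSquare (-3 : F)) (ha : a ≠ 0) :
    (∃ b, b ^ 2 = a) ↔ ∃ P : (Ea F a).Point, P ≠ 0 ∧ 3 • P = 0 := by
  constructor
  · rintro ⟨b, rfl⟩
    have hb : b ≠ 0 := by rintro rfl; simp at ha
    have hns : (Ea F (b ^ 2)).Nonsingular 0 b := nonsingular_of_equation h2 (by ring) hb
    exact ⟨_, Point.some_ne_zero hns, three_nsmul_some_zero h2 hns hb⟩
  · rintro ⟨_ | @⟨x, y, hns⟩, hP, htor⟩
    · exact (hP rfl).elim
    obtain ⟨hy, hx⟩ := Y_ne_zero_and_X_mul_eq_zero_of_three_nsmul h2 h3 hns htor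
    have heq := equation_iff'.mp hns.1
    rcases mul_eq_zero.mp hx with rfl | hx
    · exact ⟨y, by rw [heq]; ring⟩
    · obtain ⟨r, hr⟩ := hsq
      have hr0 : r ≠ 0 := by
        rintro rfl
        exact h3 (by linear_combination -hr)
      refine ⟨y / r, ?_⟩
      rw [div_pow, div_eq_iff (pow_ne_zero 2 hr0)]
      linear_combination heq + hx + a * hr

end Ea

open Classical in
/-- For a nonzero integer `a` and `K = ℚ(ζ₃)`, `a` is not a square in `K` if and only if
`E_a(K)[3] = 0`. -/
theorem stmt1 (a : ℤ) (ha : a ≠ 0) :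
    (¬ ∃ b : CyclotomicField 3 ℚ, b ^ 2 = (a : CyclotomicField 3 ℚ)) ↔
      ∀ P : (Ea (CyclotomicField 3 ℚ) (a : CyclotomicField 3 ℚ)).Point, 3 • P = 0 → P = 0 := by
  obtain ⟨ζ, hζ⟩ :=
    (CyclotomicField.isCyclotomicExtension 3 ℚ).exists_isPrimitiveRoot rfl three_ne_zero
  have hsq : IsSquare (-3 : CyclotomicField 3 ℚ) :=
    ⟨2 * ζ + 1, by rw [← sq, hζ.two_mul_add_one_sq]⟩
  rw [Ea.exists_sq_eq_iff_exists_three_torsion two_ne_zero three_ne_zero hsq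
    (Int.cast_ne_zero.mpr ha)]
  simp only [not_exists, not_and', ne_eq, not_not]
end

section
/- Let p be an odd prime and let m be an integer with m^(p−1) ≡ 1 (mod p²). Then m is a p-th power in ℚ_p: there exists x ∈ ℚ_p with x^p = m. -/
/-! Write `m ^ (p - 1) = 1 + p² t`. For odd `p` the approximate root `a = 1 + p t` satisfies
`a ^ p ≡ 1 + p² t (mod p³)`, while the derivative of `X ^ p - m ^ (p - 1)` at `a` has norm exactly
`‖p‖`; Hensel's lemma then gives `z ∈ ℤ_p` with `z ^ p = m ^ (p - 1)`, and `x = m / z` works. -/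

open Polynomial Finset

/-- `(1 + p t) ^ p - 1 = p t · ∑ (1 + p t) ^ i`, and for odd `p` that geometric sum is `p` modulo
`p²`. -/
theorem cube_dvd_one_add_mul_pow_sub {R : Type*} [CommRing R] {p : ℕ} (hp : Odd p) (t : R) :
    (p : R) ^ 3 ∣ (1 + p * t) ^ p - (1 + p ^ 2 * t) := by
  have hsum := odd_sq_dvd_geom_sum₂_sub (1 : R) t hp
  simp only [one_pow, mul_one] at hsum
  have hgeom := geom_sum₂_mul (1 + p * t) (1 : R) p
  simp only [one_pow, mul_one, add_sub_cancel_left] at hgeom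
  have key : (1 + p * t) ^ p - (1 + p ^ 2 * t)
      = p * t * ((∑ i ∈ range p, (1 + p * t) ^ i) - p) := by
    linear_combination -hgeom
  rw [key, pow_succ', mul_assoc]
  exact mul_dvd_mul_left _ (dvd_mul_of_dvd_right hsum _)

theorem div_pow_eq_of_pow_eq_pow_pred {K : Type*} [Field K] {n : ℕ} (hn : n ≠ 0) {m z : K}
    (h : z ^ n = m ^ (n - 1)) : (m / z) ^ n = m := by
  rcases eq_or_ne m 0 with rfl | hm
  · simp [hn]
  have hz : z ≠ 0 := by
    rintro rfl
    exact pow_ne_zero _ hm (by simpa [hn] using h.symm)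
  rw [div_pow, h, div_eq_iff (pow_ne_zero _ hm), ← pow_succ',
    Nat.sub_add_cancel (Nat.pos_of_ne_zero hn)]

namespace PadicInt

variable {p : ℕ} [Fact p.Prime]

theorem norm_le_of_dvd {x y : ℤ_[p]} (h : y ∣ x) : ‖x‖ ≤ ‖y‖ := by
  obtain ⟨s, rfl⟩ := h
  rw [norm_mul]
  exact mul_le_of_le_one_right (norm_nonneg y) (norm_le_one s)

theorem norm_one_add_p_mul (t : ℤ_[p]) : ‖1 + p * t‖ = 1 := by
  have hpt : ‖(p * t : ℤ_[p])‖ < 1 := (norm_lt_one_iff_dvd _).mpr (dvd_mul_right _ _)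
  rw [norm_add_eq_max_of_ne (by rw [norm_one]; exact hpt.ne'), norm_one, max_eq_left hpt.le]

theorem exists_pow_eq_of_sq_dvd_sub_one (hp : Odd p) {u : ℤ_[p]}
    (hu : (p : ℤ_[p]) ^ 2 ∣ u - 1) : ∃ z : ℤ_[p], z ^ p = u := by
  obtain ⟨t, ht⟩ := hu
  set a : ℤ_[p] := 1 + p * t
  have hval : ‖aeval a (X ^ p - C u)‖ ≤ ‖(p : ℤ_[p])‖ ^ 3 := by
    rw [← norm_pow]
    refine norm_le_of_dvd ?_
    rw [coe_aeval_eq_eval, eval_sub, eval_pow, eval_X, eval_C, eq_add_of_sub_eq' ht]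
    exact cube_dvd_one_add_mul_pow_sub hp t
  have hderiv : ‖aeval a (derivative (X ^ p - C u))‖ = ‖(p : ℤ_[p])‖ := by
    simp [a, derivative_X_pow, norm_one_add_p_mul]
  have hp_pos : 0 < ‖(p : ℤ_[p])‖ :=
    norm_pos_iff.mpr (Nat.cast_ne_zero.mpr (Fact.out : p.Prime).ne_zero)
  have hp_lt_one : ‖(p : ℤ_[p])‖ < 1 := (norm_lt_one_iff_dvd _).mpr dvd_rfl
  obtain ⟨z, hz, -⟩ := hensels_lemma <| hval.trans_lt <| by
    rw [hderiv]
    exact pow_lt_pow_right_of_lt_one₀ hp_pos hp_lt_one (by norm_num)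
  exact ⟨z, by simpa [sub_eq_zero] using hz⟩

end PadicInt

/-- If `p` is an odd prime and `m^(p-1) ≡ 1 (mod p²)` as integers, then `m` is a `p`-th
power in `ℚ_p`. -/
theorem stmt8 (p : ℕ) [Fact p.Prime] (hp : p ≠ 2) (m : ℤ)
    (h : m ^ (p - 1) ≡ 1 [ZMOD (p : ℤ) ^ 2]) :
    ∃ x : ℚ_[p], x ^ p = (m : ℚ_[p]) := by
  have hp_prime : p.Prime := Fact.out
  have hdvd : (p : ℤ_[p]) ^ 2 ∣ (m : ℤ_[p]) ^ (p - 1) - 1 := by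
    simpa using map_dvd (Int.castRingHom ℤ_[p]) h.symm.dvd
  obtain ⟨z, hz⟩ := PadicInt.exists_pow_eq_of_sq_dvd_sub_one (hp_prime.odd_of_ne_two hp) hdvd
  refine ⟨m / z, div_pow_eq_of_pow_eq_pow_pred hp_prime.ne_zero ?_⟩
  exact_mod_cast congrArg ((↑) : ℤ_[p] → ℚ_[p]) hz
end

section
/- Let H be a subgroup of GL₂(𝔽₃) such that every element of H is upper triangular and has determinant 1, and such that −Id ∈ H. Then every element of H has trace equal to 1 or 2, and exactly half the elements of H have trace different from 2; that is, 2 · #{h ∈ H : tr(h) ≠ 2} = #H. -/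
open Matrix

/-- If `H ≤ GL₂(𝔽₃)` consists of upper-triangular matrices of determinant `1` and contains
`-Id`, then every element of `H` has trace `1` or `2`, and exactly half the elements of `H`
have trace different from `2`. -/
theorem stmt11 (H : Subgroup (GeneralLinearGroup (Fin 2) (ZMod 3)))
    (hut : ∀ h ∈ H, ((h : GeneralLinearGroup (Fin 2) (ZMod 3)) :
      Matrix (Fin 2) (Fin 2) (ZMod 3)) 1 0 = 0)
    (hdet : ∀ h ∈ H, ((h : GeneralLinearGroup (Fin 2) (ZMod 3)) :
      Matrix (Fin 2) (Fin 2) (ZMod 3)).det = 1)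
    (hneg : (-1 : GeneralLinearGroup (Fin 2) (ZMod 3)) ∈ H) :
    (∀ h ∈ H, Matrix.trace ((h : GeneralLinearGroup (Fin 2) (ZMod 3)) :
        Matrix (Fin 2) (Fin 2) (ZMod 3)) = 1 ∨
      Matrix.trace ((h : GeneralLinearGroup (Fin 2) (ZMod 3)) :
        Matrix (Fin 2) (Fin 2) (ZMod 3)) = 2) ∧
    2 * Nat.card {h : H // Matrix.trace (((h : GeneralLinearGroup (Fin 2) (ZMod 3))) :
        Matrix (Fin 2) (Fin 2) (ZMod 3)) ≠ 2} = Nat.card H := by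
  have key : ∀ h ∈ H, Matrix.trace ((h : GeneralLinearGroup (Fin 2) (ZMod 3)) :
      Matrix (Fin 2) (Fin 2) (ZMod 3)) = 1 ∨
      Matrix.trace ((h : GeneralLinearGroup (Fin 2) (ZMod 3)) :
      Matrix (Fin 2) (Fin 2) (ZMod 3)) = 2 := by
    intro h hh
    have h1 := hut h hh
    have h2 := hdet h hh
    rw [Matrix.det_fin_two, h1] at h2
    rw [Matrix.trace_fin_two]
    revert h2
    generalize ((h : GeneralLinearGroup (Fin 2) (ZMod 3)) :
      Matrix (Fin 2) (Fin 2) (ZMod 3)) 0 0 = a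
    generalize ((h : GeneralLinearGroup (Fin 2) (ZMod 3)) :
      Matrix (Fin 2) (Fin 2) (ZMod 3)) 0 1 = b
    generalize ((h : GeneralLinearGroup (Fin 2) (ZMod 3)) :
      Matrix (Fin 2) (Fin 2) (ZMod 3)) 1 1 = d
    revert a b d; decide
  refine ⟨key, ?_⟩
  have tneg : ∀ h : GeneralLinearGroup (Fin 2) (ZMod 3),
      Matrix.trace (((-1 * h : GeneralLinearGroup (Fin 2) (ZMod 3))) :
        Matrix (Fin 2) (Fin 2) (ZMod 3)) =
      - Matrix.trace ((h : GeneralLinearGroup (Fin 2) (ZMod 3)) :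
        Matrix (Fin 2) (Fin 2) (ZMod 3)) := by
    intro h
    simp [Units.val_mul, Matrix.trace_neg]
  let e : {h : H // Matrix.trace (((h : GeneralLinearGroup (Fin 2) (ZMod 3))) :
        Matrix (Fin 2) (Fin 2) (ZMod 3)) ≠ 2} ≃
      {h : H // Matrix.trace (((h : GeneralLinearGroup (Fin 2) (ZMod 3))) :
        Matrix (Fin 2) (Fin 2) (ZMod 3)) = 2} :=
    { toFun := fun h => ⟨⟨-1 * h.1.1, H.mul_mem hneg h.1.2⟩, by
        have := key h.1.1 h.1.2
        have h1 : Matrix.trace (((h.1 : GeneralLinearGroup (Fin 2) (ZMod 3))) :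
            Matrix (Fin 2) (Fin 2) (ZMod 3)) = 1 := this.resolve_right h.2
        simp only [tneg, h1]; decide⟩
      invFun := fun h => ⟨⟨-1 * h.1.1, H.mul_mem hneg h.1.2⟩, by
        simp only [tneg, h.2]; decide⟩
      left_inv := fun h => Subtype.ext (Subtype.ext (by
        show -1 * (-1 * h.1.1) = h.1.1
        rw [← mul_assoc]; simp))
      right_inv := fun h => Subtype.ext (Subtype.ext (by
        show -1 * (-1 * h.1.1) = h.1.1
        rw [← mul_assoc]; simp)) }
  have hcard := Nat.card_congr e
  have hsplit := Nat.card_congr (Equiv.sumCompl (fun h : H =>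
      Matrix.trace (((h : GeneralLinearGroup (Fin 2) (ZMod 3))) :
        Matrix (Fin 2) (Fin 2) (ZMod 3)) = 2))
  rw [Nat.card_sum] at hsplit
  rw [hcard] at hsplit
  omega
end

section
/- Let G be a subgroup of GL₂(𝔽₃) such that every element of G is upper triangular and such that G contains an element of determinant −1. Then every group homomorphism from G to ℤ/3ℤ is trivial; equivalently, G has no quotient of order 3. -/
open Matrix

set_option maxRecDepth 10000 in
private lemma stmt13_L1 : ∀ M : Matrix (Fin 2) (Fin 2) (ZMod 3), M 1 0 = 0 → M.det ≠ 0 →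
    (M ^ 4) 0 0 = 1 ∧ (M ^ 4) 1 1 = 1 ∧ (M ^ 4) 1 0 = 0 := by decide

set_option maxRecDepth 10000 in
private lemma stmt13_L2 : ∀ U H : Matrix (Fin 2) (Fin 2) (ZMod 3), U 0 0 = 1 → U 1 1 = 1 →
    U 1 0 = 0 → H 1 0 = 0 → H.det = -1 → U * H * U = H := by decide

private lemma stmt13_triv4 : ∀ x : Multiplicative (ZMod 3), x ^ 4 = 1 → x = 1 := by decide

private lemma stmt13_triv2 : ∀ x : Multiplicative (ZMod 3), x * x = 1 → x = 1 := by decide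

/-- If `G ≤ GL₂(𝔽₃)` consists of upper-triangular matrices and contains an element of
determinant `-1`, then every group homomorphism `G → ℤ/3ℤ` is trivial. -/
theorem stmt13 (G : Subgroup (GeneralLinearGroup (Fin 2) (ZMod 3)))
    (hut : ∀ g ∈ G, ((g : GeneralLinearGroup (Fin 2) (ZMod 3)) :
      Matrix (Fin 2) (Fin 2) (ZMod 3)) 1 0 = 0)
    (hdet : ∃ g ∈ G, ((g : GeneralLinearGroup (Fin 2) (ZMod 3)) :
      Matrix (Fin 2) (Fin 2) (ZMod 3)).det = -1) :
    ∀ f : G →* Multiplicative (ZMod 3), ∀ g : G, f g = 1 := by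
  obtain ⟨h0, hh0, hdet0⟩ := hdet
  intro f g
  set h : G := ⟨h0, hh0⟩ with hdefh
  -- every "unipotent" element of G is killed by f
  have key : ∀ x : G, ((x : GeneralLinearGroup (Fin 2) (ZMod 3)) :
      Matrix (Fin 2) (Fin 2) (ZMod 3)) 0 0 = 1 →
      ((x : GeneralLinearGroup (Fin 2) (ZMod 3)) : Matrix (Fin 2) (Fin 2) (ZMod 3)) 1 1 = 1 →
      ((x : GeneralLinearGroup (Fin 2) (ZMod 3)) : Matrix (Fin 2) (Fin 2) (ZMod 3)) 1 0 = 0 →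
      f x = 1 := by
    intro x h00 h11 h10
    have hm : ((x : GeneralLinearGroup (Fin 2) (ZMod 3)) : Matrix (Fin 2) (Fin 2) (ZMod 3)) *
        (h0 : Matrix (Fin 2) (Fin 2) (ZMod 3)) *
        ((x : GeneralLinearGroup (Fin 2) (ZMod 3)) : Matrix (Fin 2) (Fin 2) (ZMod 3)) =
        (h0 : Matrix (Fin 2) (Fin 2) (ZMod 3)) :=
      stmt13_L2 _ _ h00 h11 h10 (hut h0 hh0) hdet0
    have hGL : (x : GeneralLinearGroup (Fin 2) (ZMod 3)) * h0 *
        (x : GeneralLinearGroup (Fin 2) (ZMod 3)) = h0 := Units.ext hm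
    have hG : x * h * x = h := Subtype.ext hGL
    have := congrArg f hG
    rw [_root_.map_mul, _root_.map_mul] at this
    have h2 : f x * f x = 1 := by
      have hcomm : f x * f x * f h = 1 * f h := by
        rw [one_mul, mul_assoc, mul_comm (f x) (f h), ← mul_assoc]; exact this
      exact mul_right_cancel hcomm
    exact stmt13_triv2 _ h2
  -- apply to g ^ 4
  have hdetne : (((g : GeneralLinearGroup (Fin 2) (ZMod 3)) :
      Matrix (Fin 2) (Fin 2) (ZMod 3))).det ≠ 0 := by
    have hu : IsUnit ((g : GeneralLinearGroup (Fin 2) (ZMod 3)) :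
        Matrix (Fin 2) (Fin 2) (ZMod 3)) := (g : GeneralLinearGroup (Fin 2) (ZMod 3)).isUnit
    exact ((Matrix.isUnit_iff_isUnit_det _).mp hu).ne_zero
  obtain ⟨e1, e2, e3⟩ := stmt13_L1 _ (hut g g.2) hdetne
  have hcoe : (((g ^ 4 : G) : GeneralLinearGroup (Fin 2) (ZMod 3)) :
      Matrix (Fin 2) (Fin 2) (ZMod 3)) =
      ((g : GeneralLinearGroup (Fin 2) (ZMod 3)) : Matrix (Fin 2) (Fin 2) (ZMod 3)) ^ 4 := by
    push_cast
    rfl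
  have h4 : f (g ^ 4) = 1 :=
    key (g ^ 4) (by rw [hcoe]; exact e1) (by rw [hcoe]; exact e2) (by rw [hcoe]; exact e3)
  rw [map_pow] at h4
  exact stmt13_triv4 _ h4
end
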